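/- Let m ≥ 1, x_k = k/2^m, and y_k = φ₂(k) for k = 0,...,2^m−1. Then ∑_{k=0}^{2^m−1} x_k·y_k² = (2^m − 1)(4^{m+1} + 3·2^m(m−2) + 2)/(3·2^{2m+3}). -/

import Mathlib

/-!
Digit reversal satisfies `φ₂(2j) = φ₂(j)/2` and `φ₂(2j+1) = (1 + φ₂(j))/2`. Pairing the indices
`2j, 2j+1` therefore expresses each of the moments `∑ φ₂(k)`, `∑ φ₂(k)²`, `∑ k φ₂(k)`, `∑ k φ₂(k)²`
over `k < 2^(m+1)` through the lower moments over `k < 2^m`, and the four closed forms follow by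
induction on `m`, one after the other.
-/

/-- The base-2 digit reversal (radical inverse) function. -/
noncomputable def phi2 (k : ℕ) : ℝ :=
  ∑ i ∈ Finset.range (k + 1), if Nat.testBit k i then (1 : ℝ) / 2 ^ (i + 1) else 0

open Finset

lemma Finset.sum_range_two_mul {M : Type*} [AddCommMonoid M] (f : ℕ → M) (n : ℕ) :
    ∑ k ∈ range (2 * n), f k = ∑ j ∈ range n, (f (2 * j) + f (2 * j + 1)) := by
  induction n with
  | zero => simp
  | succ n ih =>
    rw [mul_add, mul_one, sum_range_succ, sum_range_succ, sum_range_succ, ih, add_assoc]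

lemma Finset.sum_range_cast_id (n : ℕ) : ∑ k ∈ range n, (k : ℝ) = n * (n - 1) / 2 := by
  induction n with
  | zero => simp
  | succ n ih => rw [sum_range_succ, ih]; push_cast; ring

lemma phi2_eq_sum_range_of_lt {k n : ℕ} (h : k < n) :
    phi2 k = ∑ i ∈ range n, if k.testBit i then (1 : ℝ) / 2 ^ (i + 1) else 0 := by
  refine sum_subset (range_subset_range.2 h) fun i _ hi => ?_
  have hki : k < 2 ^ i :=
    k.lt_two_pow_self.trans_le (Nat.pow_le_pow_right two_pos (by simp at hi; omega))
  simp [Nat.testBit_lt_two_pow hki]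

lemma phi2_bit (b : Bool) (j : ℕ) : phi2 (Nat.bit b j) = (b.toNat + phi2 j) / 2 := by
  have hlt : Nat.bit b j < 2 * j + 1 + 1 := by cases b <;> simp [Nat.bit_val]
  rw [phi2_eq_sum_range_of_lt hlt, phi2_eq_sum_range_of_lt (by omega : j < 2 * j + 1),
    sum_range_succ', Nat.testBit_bit_zero, add_div, sum_div, add_comm]
  congr 1
  · cases b <;> simp
  · refine sum_congr rfl fun i _ => ?_
    rw [Nat.testBit_bit_succ]
    split_ifs <;> ring

lemma phi2_two_mul (j : ℕ) : phi2 (2 * j) = phi2 j / 2 := by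
  simpa using phi2_bit false j

lemma phi2_two_mul_add_one (j : ℕ) : phi2 (2 * j + 1) = (1 + phi2 j) / 2 := by
  simpa using phi2_bit true j

lemma sum_range_two_pow_succ {M : Type*} [AddCommMonoid M] (f : ℕ → M) (m : ℕ) :
    ∑ k ∈ range (2 ^ (m + 1)), f k = ∑ j ∈ range (2 ^ m), (f (2 * j) + f (2 * j + 1)) := by
  rw [pow_succ', sum_range_two_mul]

lemma sum_phi2 (m : ℕ) : ∑ k ∈ range (2 ^ m), phi2 k = ((2 : ℝ) ^ m - 1) / 2 := by
  induction m with
  | zero => simp [phi2]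
  | succ m ih =>
    have hpair (j : ℕ) : phi2 (2 * j) + phi2 (2 * j + 1) = phi2 j + 1 / 2 := by
      rw [phi2_two_mul, phi2_two_mul_add_one]; ring
    simp only [sum_range_two_pow_succ, hpair, sum_add_distrib, ih, sum_const, card_range,
      nsmul_eq_mul]
    push_cast; ring

lemma sum_phi2_sq (m : ℕ) :
    ∑ k ∈ range (2 ^ m), phi2 k ^ 2 = (2 : ℝ) ^ m / 3 - 1 / 2 + 1 / (6 * 2 ^ m) := by
  induction m with
  | zero => norm_num [phi2]
  | succ m ih =>
    have hpair (j : ℕ) : phi2 (2 * j) ^ 2 + phi2 (2 * j + 1) ^ 2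
        = phi2 j ^ 2 / 2 + phi2 j / 2 + 1 / 4 := by
      rw [phi2_two_mul, phi2_two_mul_add_one]; ring
    simp only [sum_range_two_pow_succ, hpair, sum_add_distrib, ← sum_div, ih, sum_phi2,
      sum_const, card_range, nsmul_eq_mul]
    push_cast; field_simp; ring

lemma sum_mul_phi2 (m : ℕ) :
    ∑ k ∈ range (2 ^ m), (k : ℝ) * phi2 k
      = ((2 : ℝ) ^ m) ^ 2 / 4 + m * 2 ^ m / 8 - 2 ^ m / 2 + 1 / 4 := by
  induction m with
  | zero => norm_num [phi2]
  | succ m ih =>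
    have hpair (j : ℕ) :
        ((2 * j : ℕ) : ℝ) * phi2 (2 * j) + ((2 * j + 1 : ℕ) : ℝ) * phi2 (2 * j + 1)
          = 2 * (j * phi2 j) + j + phi2 j / 2 + 1 / 2 := by
      rw [phi2_two_mul, phi2_two_mul_add_one]; push_cast; ring
    simp only [sum_range_two_pow_succ, hpair, sum_add_distrib, ← mul_sum, ← sum_div, ih,
      sum_phi2, sum_range_cast_id, sum_const, card_range, nsmul_eq_mul]
    push_cast; ring

lemma sum_mul_phi2_sq (m : ℕ) :
    ∑ k ∈ range (2 ^ m), (k : ℝ) * phi2 k ^ 2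
      = ((2 : ℝ) ^ m) ^ 2 / 6 + (m - 2) * 2 ^ m / 8 - 2 ^ m / 6 - m / 8 + 1 / 3
          - 1 / (12 * 2 ^ m) := by
  induction m with
  | zero => norm_num [phi2]
  | succ m ih =>
    have hpair (j : ℕ) :
        ((2 * j : ℕ) : ℝ) * phi2 (2 * j) ^ 2 + ((2 * j + 1 : ℕ) : ℝ) * phi2 (2 * j + 1) ^ 2
          = j * phi2 j ^ 2 + j * phi2 j + j / 2 + phi2 j ^ 2 / 4 + phi2 j / 2 + 1 / 4 := by
      rw [phi2_two_mul, phi2_two_mul_add_one]; push_cast; ring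
    simp only [sum_range_two_pow_succ, hpair, sum_add_distrib, ← sum_div, ih, sum_mul_phi2,
      sum_phi2_sq, sum_phi2, sum_range_cast_id, sum_const, card_range, nsmul_eq_mul]
    push_cast; field_simp; ring

theorem hammersley_S4_general (m : ℕ) :
    ∑ k ∈ Finset.range (2 ^ m), ((k : ℝ) / 2 ^ m) * (phi2 k) ^ 2
      = ((2:ℝ) ^ m - 1) * ((4:ℝ) ^ (m + 1) + 3 * 2 ^ m * ((m : ℝ) - 2) + 2)
        / (3 * 2 ^ (2 * m + 3)) := by
  simp only [div_mul_eq_mul_div, ← sum_div, sum_mul_phi2_sq]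
  have h4 : (4 : ℝ) ^ m = ((2 : ℝ) ^ m) ^ 2 := by
    rw [← pow_mul, mul_comm, pow_mul]; norm_num
  rw [pow_succ (4 : ℝ), h4, pow_add, mul_comm 2 m, pow_mul]
  field_simp
  ring

theorem hammersley_S4 (m : ℕ) (hm : 1 ≤ m) :
    ∑ k ∈ Finset.range (2 ^ m), ((k : ℝ) / 2 ^ m) * (phi2 k) ^ 2
      = ((2:ℝ) ^ m - 1) * ((4:ℝ) ^ (m + 1) + 3 * 2 ^ m * ((m : ℝ) - 2) + 2)
        / (3 * 2 ^ (2 * m + 3)) :=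
  hammersley_S4_general m
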